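/- For every integer n ≥ 1, the 2-rank of the compact symplectic group Sp(n) equals n. -/

import Mathlib

open scoped Quaternion

/-- The Borel–Serre 2-rank `r₂(G)`: the supremum of those `k` such that `(ZMod 2)^k`
embeds into `G` by an injective group homomorphism. -/
noncomputable def twoRank (G : Type*) [Group G] : ℕ :=
  sSup {k : ℕ | ∃ f : Multiplicative (Fin k → ZMod 2) →* G, Function.Injective f}

/-- The compact symplectic group `Sp(n)`: the unitary group of the star ring of
`n × n` quaternionic matrices. -/
noncomputable abbrev Sp (n : ℕ) := unitary (Matrix (Fin n) (Fin n) ℍ[ℝ])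

/-!
The diagonal matrices with entries `±1` form a subgroup `(ZMod 2)^n` of `Sp(n)`. Conversely, an
elementary abelian 2-subgroup `E ≅ (ZMod 2)^k` of `GL_n(D)`, `D` a division ring of characteristic
`≠ 2`, is simultaneously diagonalisable: the products over the generators `gᵢ` of the projections
`(1 ± gᵢ)/2` form a complete family of orthogonal idempotents `p_c`, indexed by the characters `c`
of `E`, with `g = ∑_c c(g) p_c`. Faithfulness forces the characters with `p_c ≠ 0` to separate the
points of `E`, so there are at least `k` of them, and nonzero orthogonal idempotents in `M_n(D)`
have linearly independent rows, so there are at most `n` of them.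
-/

open Matrix

lemma ZMod.eq_zero_or_eq_one (z : ZMod 2) : z = 0 ∨ z = 1 := by decide +revert

lemma ZMod.neg_one_pow_val_add {R : Type*} [Ring R] (a b : ZMod 2) :
    (-1 : R) ^ (a + b).val = (-1) ^ a.val * (-1) ^ b.val := by
  rw [ZMod.val_add, ← neg_one_pow_eq_pow_mod_two, pow_add]

lemma ZMod.neg_one_pow_val_injective {R : Type*} [Monoid R] [HasDistribNeg R] (h : (-1 : R) ≠ 1) :
    Function.Injective fun z : ZMod 2 ↦ (-1 : R) ^ z.val := by
  intro a b hab
  obtain rfl | rfl := a.eq_zero_or_eq_one <;> obtain rfl | rfl := b.eq_zero_or_eq_one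
  · rfl
  · exact absurd (by simpa [ZMod.val_one] using hab.symm) h
  · exact absurd (by simpa [ZMod.val_one] using hab) h
  · rfl

lemma ZMod.univ_two : (Finset.univ : Finset (ZMod 2)) = {0, 1} := by decide

lemma MonoidHom.map_mul_self_eq_one {V M : Type*} [AddCommGroup V] [Module (ZMod 2) V]
    [Monoid M] (ρ : Multiplicative V →* M) (x : Multiplicative V) : ρ x * ρ x = 1 := by
  rw [← map_mul, ← ofAdd_toAdd x, ← ofAdd_add, ZModModule.add_self, ofAdd_zero, map_one]

theorem CompleteOrthogonalIdempotents.prod_pi {R ι : Type*} [CommSemiring R] [Fintype ι]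
    [DecidableEq ι] {J : ι → Type*} [∀ i, Fintype (J i)]
    {e : ∀ i, J i → R} (he : ∀ i, CompleteOrthogonalIdempotents (e i)) :
    CompleteOrthogonalIdempotents fun c : (∀ i, J i) ↦ ∏ i, e i (c i) := by
  classical
  refine ⟨OrthogonalIdempotents.iff_mul_eq.2 fun c c' ↦ ?_, ?_⟩
  · simp_rw [← Finset.prod_mul_distrib, (he _).mul_eq, Fintype.prod_ite_zero, funext_iff]
  · rw [← Fintype.prod_sum]
    simp [(he _).complete]

section EigenIdempotent

variable {R : Type*} [CommRing R] [Invertible (2 : R)]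

noncomputable def eigenIdempotent (g : R) (z : ZMod 2) : R := ⅟2 * (1 + (-1) ^ z.val * g)

variable {g : R}

lemma eigenIdempotent_mul (hg : g * g = 1) (z : ZMod 2) :
    eigenIdempotent g z * g = (-1) ^ z.val * eigenIdempotent g z := by
  have hs : ((-1 : R) ^ z.val) ^ 2 = 1 := by rw [← pow_mul, pow_mul', neg_one_sq, one_pow]
  unfold eigenIdempotent
  linear_combination (⅟2 * (-1 : R) ^ z.val) * hg - ⅟2 * g * hs

lemma completeOrthogonalIdempotents_eigenIdempotent (hg : g * g = 1) :
    CompleteOrthogonalIdempotents (eigenIdempotent g) := by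
  rw [CompleteOrthogonalIdempotents.iff_ortho_complete, ZMod.univ_two,
    Finset.sum_pair zero_ne_one]
  have h01 : eigenIdempotent g 0 * eigenIdempotent g 1 = 0 := by
    simp only [eigenIdempotent, ZMod.val_zero, ZMod.val_one, pow_zero, pow_one]
    linear_combination (-⅟2 * ⅟2 : R) * hg
  refine ⟨fun z w hzw ↦ ?_, ?_⟩
  · obtain rfl | rfl := z.eq_zero_or_eq_one <;> obtain rfl | rfl := w.eq_zero_or_eq_one
    all_goals first | exact absurd rfl hzw | exact h01 | rw [mul_comm]; exact h01
  · simp only [eigenIdempotent, ZMod.val_zero, ZMod.val_one, pow_zero, pow_one]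
    linear_combination (invOf_mul_self (2 : R))

variable {ι : Type*} [Fintype ι] [DecidableEq ι] (ρ : Multiplicative (ι → ZMod 2) →* R)

noncomputable def jointEigenIdempotent (c : ι → ZMod 2) : R :=
  ∏ i, eigenIdempotent (ρ (.ofAdd (Pi.single i 1))) (c i)

theorem completeOrthogonalIdempotents_jointEigenIdempotent :
    CompleteOrthogonalIdempotents (jointEigenIdempotent ρ) :=
  .prod_pi fun _ ↦ completeOrthogonalIdempotents_eigenIdempotent (ρ.map_mul_self_eq_one _)

theorem jointEigenIdempotent_mul (c x : ι → ZMod 2) :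
    jointEigenIdempotent ρ c * ρ (.ofAdd x) =
      (-1) ^ (c ⬝ᵥ x).val * jointEigenIdempotent ρ c := by
  induction x using Pi.single_induction with
  | zero => simp
  | add x y hx hy =>
    rw [ofAdd_add, map_mul, ← mul_assoc, hx, mul_assoc, hy, dotProduct_add,
      ZMod.neg_one_pow_val_add]
    ring
  | single i z =>
    obtain rfl | rfl := z.eq_zero_or_eq_one
    · simp
    · rw [dotProduct_single, mul_one, jointEigenIdempotent, Fintype.prod_eq_mul_prod_compl i,
        mul_right_comm, eigenIdempotent_mul (ρ.map_mul_self_eq_one _), mul_assoc]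

theorem eq_sum_jointEigenIdempotent (x : ι → ZMod 2) :
    ρ (.ofAdd x) = ∑ c, (-1) ^ (c ⬝ᵥ x).val * jointEigenIdempotent ρ c :=
  calc ρ (.ofAdd x) = (∑ c, jointEigenIdempotent ρ c) * ρ (.ofAdd x) := by
        rw [(completeOrthogonalIdempotents_jointEigenIdempotent ρ).complete, one_mul]
    _ = _ := by
        rw [Finset.sum_mul]
        exact Finset.sum_congr rfl fun c _ ↦ jointEigenIdempotent_mul ρ c x

end EigenIdempotent

theorem Matrix.natCard_le_of_orthogonalIdempotents {D m S : Type*} [DivisionRing D] [Fintype m]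
    [DecidableEq m] [Finite S] {p : S → Matrix m m D} (hp : OrthogonalIdempotents p)
    (hne : ∀ s, p s ≠ 0) : Nat.card S ≤ Fintype.card m := by
  classical
  cases nonempty_fintype S
  choose r hr using fun s ↦ Function.ne_iff.1 (hne s)
  have hrow : ∀ s t, p s (r s) ᵥ* p t = if s = t then p s (r s) else 0 := fun s t ↦ by
    rw [← mul_apply_eq_vecMul, hp.mul_eq]
    split_ifs <;> rfl
  have hli : LinearIndependent D fun s ↦ p s (r s) := by
    refine Fintype.linearIndependent_iff.2 fun a ha t ↦ ?_
    have := congrArg (· ᵥ* p t) ha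
    simp only [sum_vecMul, smul_vecMul, hrow, smul_ite, smul_zero, Finset.sum_ite_eq',
      Finset.mem_univ, if_true, zero_vecMul] at this
    exact (smul_eq_zero.1 this).resolve_right (hr t)
  simpa using hli.fintype_card_le_finrank

theorem card_le_natCard_support_of_injective_of_eq_sum {ι A : Type*} [Fintype ι] [DecidableEq ι]
    [Ring A] {ρ : (ι → ZMod 2) → A} (hρ : Function.Injective ρ) (p : (ι → ZMod 2) → A)
    (h : ∀ x, ρ x = ∑ c, (-1) ^ (c ⬝ᵥ x).val * p c) :
    Fintype.card ι ≤ Nat.card (Function.support p) := by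
  classical
  have hinj : Function.Injective fun x (c : Function.support p) ↦ c.1 ⬝ᵥ x := fun x y hxy ↦ by
    refine hρ ?_
    rw [h, h]
    refine Finset.sum_congr rfl fun c _ ↦ ?_
    by_cases hc : p c = 0
    · simp [hc]
    · rw [show c ⬝ᵥ x = c ⬝ᵥ y from congrFun hxy ⟨c, hc⟩]
  have := Nat.card_le_card_of_injective _ hinj
  rw [Nat.card_fun, Nat.card_fun, Nat.card_zmod] at this
  rw [← Nat.card_eq_fintype_card]
  exact (Nat.pow_le_pow_iff_right one_lt_two).1 this

theorem Matrix.card_le_of_injective_monoidHom (K : Type*) {D ι m : Type*} [CommRing K]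
    [Invertible (2 : K)] [DivisionRing D] [Algebra K D] [Fintype ι] [DecidableEq ι] [Fintype m]
    [DecidableEq m] {ρ : Multiplicative (ι → ZMod 2) →* Matrix m m D}
    (hρ : Function.Injective ρ) : Fintype.card ι ≤ Fintype.card m := by
  -- The idempotents are built in the commutative group algebra `K[(ZMod 2)^ι]` and pushed forward.
  let A := AddMonoidAlgebra K (ι → ZMod 2)
  let _ : Invertible (2 : A) := (Invertible.map (algebraMap K A) 2).copy 2 (map_ofNat _ 2).symm
  let φ := (AddMonoidAlgebra.lift K (Matrix m m D) (ι → ZMod 2) ρ).toRingHom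
  let p c := φ (jointEigenIdempotent (AddMonoidAlgebra.of K (ι → ZMod 2)) c)
  have hp : CompleteOrthogonalIdempotents p :=
    (completeOrthogonalIdempotents_jointEigenIdempotent _).map φ
  have hsum : ∀ x, ρ (.ofAdd x) = ∑ c, (-1) ^ (c ⬝ᵥ x).val * p c := fun x ↦ by
    simpa [φ, p, AddMonoidAlgebra.lift_of] using
      congrArg φ (eq_sum_jointEigenIdempotent (AddMonoidAlgebra.of K (ι → ZMod 2)) x)
  calc Fintype.card ι ≤ Nat.card (Function.support p) :=
        card_le_natCard_support_of_injective_of_eq_sum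
          (hρ.comp Multiplicative.ofAdd.injective) p hsum
    _ ≤ Fintype.card m :=
        natCard_le_of_orthogonalIdempotents (hp.embedding (Function.Embedding.subtype _))
          fun c ↦ c.2

lemma Matrix.diagonal_mem_unitary {D m : Type*} [Ring D] [StarRing D] [Fintype m] [DecidableEq m]
    {d : m → D} (hd : ∀ i, d i ∈ unitary D) : diagonal d ∈ unitary (Matrix m m D) := by
  rw [Unitary.mem_iff, star_eq_conjTranspose, diagonal_conjTranspose, diagonal_mul_diagonal,
    diagonal_mul_diagonal]
  simp [Unitary.star_mul_self_of_mem (hd _), Unitary.mul_star_self_of_mem (hd _)]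

section SignDiagonal

variable (D m : Type*) [Ring D] [StarRing D] [Fintype m] [DecidableEq m]

noncomputable def signDiagonal : Multiplicative (m → ZMod 2) →* unitary (Matrix m m D) :=
  .mk' (fun x ↦ ⟨diagonal fun i ↦ (-1) ^ (x.toAdd i).val,
      diagonal_mem_unitary fun _ ↦ pow_mem (by simp [Unitary.mem_iff]) _⟩)
    fun x y ↦ Subtype.ext <| by
      simp [diagonal_mul_diagonal, ZMod.neg_one_pow_val_add]

variable {D m}

theorem signDiagonal_injective (h : (-1 : D) ≠ 1) : Function.Injective (signDiagonal D m) :=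
  fun x y hxy ↦ Multiplicative.toAdd.injective <| funext fun i ↦
    ZMod.neg_one_pow_val_injective h <| by
    simpa [signDiagonal] using congrFun (congrFun (congrArg Subtype.val hxy) i) i

end SignDiagonal

theorem twoRank_Sp_general (n : ℕ) : twoRank (Sp n) = n := by
  have hneg : (-1 : ℍ[ℝ]) ≠ 1 := fun h ↦ by
    have := congrArg (·.re) h
    norm_num at this
  refine IsGreatest.csSup_eq ⟨⟨_, signDiagonal_injective hneg⟩, fun k ⟨f, hf⟩ ↦ ?_⟩
  simpa using card_le_of_injective_monoidHom ℝ
    (ρ := (unitary _).subtype.comp f) (Subtype.val_injective.comp hf)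

/-- Chen–Nagano: the 2-rank of the compact symplectic group `Sp(n)` is `n`. -/
theorem twoRank_Sp (n : ℕ) (hn : 1 ≤ n) : twoRank (Sp n) = n :=
  twoRank_Sp_general n
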